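/- Let Δ : 2^{C([n],r)} → 2^{C([n],r)} be the compression operator taking a family G ⊆ C([n],r) to the initial segment of length |G| of the colexicographic order on C([n],r). For F ⊆ C([n],r)^d, writing F = ⋃_{S ∈ C([n],r)^{d−1}} {S} × F_S where F_S is the section of F in the last coordinate determined by S, define F' = ⋃_{S ∈ C([n],r)^{d−1}} {S} × Δ(F_S). Then |F'| = |F| and |∂F'| ≤ |∂F|. -/

import Mathlib

open Finset

/-- The shadow of a `d`-dimensional uniform family: all tuples obtained from a tuple in `F`
by removing one element from each coordinate. -/
def multiShadow {α : Type*} [DecidableEq α] (d : ℕ) (F : Set (Fin d → Finset α)) :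
    Set (Fin d → Finset α) :=
  {T | ∃ S ∈ F, ∃ x : Fin d → α, (∀ i, x i ∈ S i) ∧ ∀ i, T i = (S i).erase (x i)}

/-- `C([n], r)`: the `r`-element subsets of `[n] = {1, …, n}`. -/
def uniformOn (n r : ℕ) : Set (Finset ℕ) := {A | A ⊆ Finset.Icc 1 n ∧ A.card = r}

/-- The position (starting from 1) of `B` in the colexicographic order on `C([n], r)`. -/
noncomputable def colexRank (n r : ℕ) (B : Finset ℕ) : ℕ :=
  Set.ncard {A | A ∈ uniformOn n r ∧ toColex A ≤ toColex B}

/-- The compression operator `Δ`: it sends `G ⊆ C([n], r)` to the initial segment of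
length `|G|` of the colexicographic order on `C([n], r)`. -/
noncomputable def compress (n r : ℕ) (G : Set (Finset ℕ)) : Set (Finset ℕ) :=
  {B | B ∈ uniformOn n r ∧ colexRank n r B ≤ G.ncard}

/-- `F' = ⋃_{S ∈ C([n],r)^d} {S} × Δ(F_S)`, where the section is taken in the last
coordinate. -/
noncomputable def compressLast (n r d : ℕ) (F : Set (Fin (d + 1) → Finset ℕ)) :
    Set (Fin (d + 1) → Finset ℕ) :=
  {T | T (Fin.last d) ∈ compress n r {A | Fin.snoc (Fin.init T) A ∈ F}}

/-!
Counting by sections in the last coordinate, `|F'| = |F|` because `Δ` preserves sizes. For the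
shadow, fix the first `d` coordinates `P` of a tuple of `∂F'`. The section of `∂F'` over `P` is the
union of the shadows `∂Δ(F_Q)` over the tuples `Q` with `P ∈ ∂{Q}`; the families `Δ(F_Q)` are
initial colex segments, hence nested, so this union is `∂Δ(F_Q)` for a `Q` with `|F_Q|` maximal.
By Kruskal–Katona it has at most `|∂F_Q|` elements, and `∂F_Q` lies in the section of `∂F`
over `P`.
-/

open scoped FinsetFamily

variable {n r : ℕ}

lemma uniformOn_eq_coe_powersetCard (n r : ℕ) :
    uniformOn n r = ↑((Icc 1 n).powersetCard r) := by
  ext A; simp [uniformOn, mem_powersetCard]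

lemma finite_uniformOn (n r : ℕ) : (uniformOn n r).Finite := by
  rw [uniformOn_eq_coe_powersetCard]; exact finite_toSet _

lemma colexRank_le_ncard_uniformOn (B : Finset ℕ) : colexRank n r B ≤ (uniformOn n r).ncard :=
  Set.ncard_le_ncard (fun _ hA => hA.1) (finite_uniformOn n r)

lemma colexRank_pos {B : Finset ℕ} (hB : B ∈ uniformOn n r) : 0 < colexRank n r B :=
  Set.ncard_pos ((finite_uniformOn n r).subset fun _ hA => hA.1) |>.2 ⟨B, hB, le_rfl⟩

lemma colexRank_le_colexRank {A B : Finset ℕ} (h : toColex A ≤ toColex B) :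
    colexRank n r A ≤ colexRank n r B :=
  Set.ncard_le_ncard (fun _ hC => ⟨hC.1, hC.2.trans h⟩)
    ((finite_uniformOn n r).subset fun _ hC => hC.1)

lemma colexRank_lt_colexRank {A B : Finset ℕ} (hB : B ∈ uniformOn n r)
    (h : toColex A < toColex B) : colexRank n r A < colexRank n r B :=
  Set.ncard_lt_ncard ⟨fun _ hC => ⟨hC.1, hC.2.trans h.le⟩,
    fun hsub => not_le.2 h (hsub ⟨hB, le_rfl⟩).2⟩ ((finite_uniformOn n r).subset fun _ hC => hC.1)

lemma injOn_colexRank : Set.InjOn (colexRank n r) (uniformOn n r) := by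
  intro A hA B hB hAB
  rcases lt_trichotomy (toColex A) (toColex B) with h | h | h
  · exact absurd hAB (colexRank_lt_colexRank hB h).ne
  · exact toColex_inj.1 h
  · exact absurd hAB (colexRank_lt_colexRank hA h).ne'

lemma compress_subset_uniformOn (G : Set (Finset ℕ)) : compress n r G ⊆ uniformOn n r :=
  fun _ hB => hB.1

lemma compress_mono {G H : Set (Finset ℕ)} (h : G.ncard ≤ H.ncard) :
    compress n r G ⊆ compress n r H :=
  fun _ hB => ⟨hB.1, hB.2.trans h⟩

lemma nonempty_of_mem_compress {G : Set (Finset ℕ)} {B : Finset ℕ} (hB : B ∈ compress n r G) :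
    G.Nonempty :=
  Set.nonempty_of_ncard_ne_zero ((colexRank_pos hB.1).trans_le hB.2).ne'

/-- `colexRank` is injective on `C([n], r)`: the sets of rank `≤ |G|` fit into `[1, |G|]`, the
others into `(|G|, |C([n], r)|]`. -/
lemma ncard_compress {G : Set (Finset ℕ)} (hG : G ⊆ uniformOn n r) :
    (compress n r G).ncard = G.ncard := by
  have hU := finite_uniformOn n r
  have hm : G.ncard ≤ (uniformOn n r).ncard := Set.ncard_le_ncard hG hU
  have hle : (compress n r G).ncard ≤ G.ncard := by
    simpa using Set.ncard_le_ncard_of_injOn (t := ↑(Icc 1 G.ncard)) (colexRank n r)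
      (fun B hB => by simpa using ⟨colexRank_pos hB.1, hB.2⟩)
      (injOn_colexRank.mono (compress_subset_uniformOn G)) (finite_toSet _)
  have hcompl : (uniformOn n r \ compress n r G).ncard ≤ (uniformOn n r).ncard - G.ncard := by
    simpa using Set.ncard_le_ncard_of_injOn (t := ↑(Ioc G.ncard (uniformOn n r).ncard))
      (colexRank n r) (fun B hB => by
        simpa using ⟨lt_of_not_ge fun h => hB.2 ⟨hB.1, h⟩, colexRank_le_ncard_uniformOn B⟩)
      (injOn_colexRank.mono Set.sdiff_subset) (finite_toSet _)
  have := Set.ncard_sdiff_add_ncard_of_subset (compress_subset_uniformOn (n := n) (r := r) G) hU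
  omega

lemma Finset.shadow_map {α β : Type*} [DecidableEq α] [DecidableEq β] (f : α ↪ β)
    (𝒜 : Finset (Finset α)) :
    ∂ (𝒜.map (mapEmbedding f).toEmbedding) = (∂ 𝒜).map (mapEmbedding f).toEmbedding := by
  ext t
  simp only [mem_shadow_iff, mem_map, RelEmbedding.coe_toEmbedding, mapEmbedding_apply]
  constructor
  · rintro ⟨_, ⟨s, hs, rfl⟩, _, hx, rfl⟩
    obtain ⟨a, ha, rfl⟩ := mem_map.1 hx
    exact ⟨s.erase a, ⟨s, hs, a, ha, rfl⟩, map_erase ..⟩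
  · rintro ⟨_, ⟨s, hs, a, ha, rfl⟩, rfl⟩
    exact ⟨s.map f, ⟨s, hs, rfl⟩, f a, mem_map_of_mem f ha, (map_erase ..).symm⟩

def shiftOrderEmb (n : ℕ) : Fin n ↪o ℕ :=
  OrderEmbedding.ofStrictMono (fun i => i + 1) fun _ _ h => Nat.add_lt_add_right h 1

@[simp] lemma shiftOrderEmb_apply (i : Fin n) : shiftOrderEmb n i = i + 1 := rfl

lemma map_univ_shiftOrderEmb (n : ℕ) : univ.map (shiftOrderEmb n).toEmbedding = Icc 1 n := by
  ext k
  simp only [mem_map, mem_univ, true_and, RelEmbedding.coe_toEmbedding, shiftOrderEmb_apply,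
    mem_Icc]
  constructor
  · rintro ⟨i, rfl⟩
    omega
  · intro hk
    exact ⟨⟨k - 1, by omega⟩, Nat.sub_add_cancel hk.1⟩

/-- Kruskal–Katona on `[n]`, transported from Mathlib's version on `Fin n` along `i ↦ i + 1`. -/
theorem card_shadow_le_of_colex_downward {𝒜 𝒞 : Finset (Finset ℕ)} (h𝒜 : ↑𝒜 ⊆ uniformOn n r)
    (h𝒞 : ↑𝒞 ⊆ uniformOn n r)
    (h𝒞down : ∀ ⦃B⦄, B ∈ 𝒞 → ∀ ⦃A⦄, A ∈ uniformOn n r → toColex A < toColex B → A ∈ 𝒞)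
    (hcard : #𝒞 ≤ #𝒜) : #(∂ 𝒞) ≤ #(∂ 𝒜) := by
  set e := (shiftOrderEmb n).toEmbedding
  set φ := (mapEmbedding e).toEmbedding
  have hU : uniformOn n r = ↑((univ.powersetCard r).map φ) := by
    rw [uniformOn_eq_coe_powersetCard, ← map_univ_shiftOrderEmb, powersetCard_map]
  rw [hU, coe_subset, subset_map_iff] at h𝒜 h𝒞
  obtain ⟨𝒜, h𝒜, rfl⟩ := h𝒜
  obtain ⟨𝒞, h𝒞, rfl⟩ := h𝒞
  rw [card_map, card_map] at hcard
  rw [shadow_map, shadow_map, card_map, card_map]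
  refine kruskal_katona (fun s hs => (mem_powersetCard.1 (h𝒜 hs)).2) hcard
    ⟨fun s hs => (mem_powersetCard.1 (h𝒞 hs)).2, fun s t hs ⟨hts, ht⟩ => ?_⟩
  refine (mem_map' φ).1 (h𝒞down (mem_map_of_mem φ hs) ?_ ?_)
  · rw [hU]
    exact mem_map_of_mem φ (mem_powersetCard.2 ⟨subset_univ t, ht⟩)
  · simpa only [φ, e, RelEmbedding.coe_toEmbedding, mapEmbedding_apply, map_eq_image] using
      (Colex.toColex_image_lt_toColex_image (shiftOrderEmb n).strictMono).2 hts

section SetShadow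

variable {α : Type*} [DecidableEq α] {G H : Set (Finset α)}

def setShadow (G : Set (Finset α)) : Set (Finset α) := ⋃ A ∈ G, (A.erase ·) '' ↑A

lemma mem_setShadow {B : Finset α} : B ∈ setShadow G ↔ ∃ A ∈ G, ∃ x ∈ A, A.erase x = B := by
  simp [setShadow]

lemma coe_shadow (𝒜 : Finset (Finset α)) : (↑(∂ 𝒜) : Set (Finset α)) = setShadow ↑𝒜 := by
  ext B
  simp [mem_setShadow, mem_shadow_iff]

lemma setShadow_mono (h : G ⊆ H) : setShadow G ⊆ setShadow H :=
  Set.biUnion_subset_biUnion_left h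

lemma Set.Finite.setShadow (hG : G.Finite) : (setShadow G).Finite :=
  hG.biUnion fun A _ => A.finite_toSet.image _

end SetShadow

theorem ncard_setShadow_compress_le {G : Set (Finset ℕ)} (hG : G ⊆ uniformOn n r) :
    (setShadow (compress n r G)).ncard ≤ (setShadow G).ncard := by
  obtain ⟨𝒜, rfl⟩ := ((finite_uniformOn n r).subset hG).exists_finset_coe
  obtain ⟨𝒞, h𝒞⟩ := ((finite_uniformOn n r).subset
    (compress_subset_uniformOn (n := n) (r := r) ↑𝒜)).exists_finset_coe
  rw [← h𝒞, ← coe_shadow, ← coe_shadow, Set.ncard_coe_finset, Set.ncard_coe_finset]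
  refine card_shadow_le_of_colex_downward hG (h𝒞 ▸ compress_subset_uniformOn _)
    (fun B hB A hA hAB => ?_) ?_
  · rw [← mem_coe, h𝒞] at hB ⊢
    exact ⟨hA, (colexRank_le_colexRank hAB.le).trans hB.2⟩
  · rw [← Set.ncard_coe_finset, h𝒞, ncard_compress hG, Set.ncard_coe_finset]

section LastSection

variable {X : Type*} {d : ℕ}

def lastSection (F : Set (Fin (d + 1) → X)) (P : Fin d → X) : Set X := {A | Fin.snoc P A ∈ F}

lemma lastSection_subset {U : Set X} {F : Set (Fin (d + 1) → X)} (hF : ∀ T ∈ F, ∀ i, T i ∈ U)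
    (P : Fin d → X) : lastSection F P ⊆ U :=
  fun A hA => by simpa using hF _ hA (Fin.last d)

lemma ncard_eq_sum_ncard_lastSection {U : Set X} (hU : U.Finite) {F : Set (Fin (d + 1) → X)}
    (hF : ∀ T ∈ F, ∀ i, T i ∈ U) :
    F.ncard = ∑ P ∈ Fintype.piFinset fun _ => hU.toFinset, (lastSection F P).ncard := by
  classical
  have hFfin : F.Finite := (Set.Finite.pi' fun _ => hU).subset hF
  rw [Set.ncard_eq_toFinset_card F hFfin,
    card_eq_sum_card_fiberwise (f := Fin.init) fun T hT => ?_]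
  · refine sum_congr rfl fun P _ => ?_
    rw [← Set.ncard_coe_finset,
      ← Set.ncard_preimage_of_injective_subset_range (Fin.snoc_right_injective P)]
    · congr 1
      ext A
      simp [lastSection]
    · intro T hT
      refine ⟨T (Fin.last d), ?_⟩
      rw [← (mem_filter.1 hT).2, Fin.snoc_init_self]
  · simpa [Fintype.mem_piFinset, Fin.init] using
      fun i : Fin d => hF T (hFfin.mem_toFinset.1 hT) i.castSucc

end LastSection

lemma snoc_mem_multiShadow_iff {α : Type*} [DecidableEq α] {d : ℕ}
    {G : Set (Fin (d + 1) → Finset α)} {P : Fin d → Finset α} {B : Finset α} :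
    Fin.snoc P B ∈ multiShadow (d + 1) G ↔
      ∃ Q, P ∈ multiShadow d {Q} ∧ B ∈ setShadow (lastSection G Q) := by
  constructor
  · rintro ⟨S, hS, x, hx, hT⟩
    refine ⟨Fin.init S, ⟨_, rfl, Fin.init x, fun i => hx _, fun i => ?_⟩,
      mem_setShadow.2 ⟨S (Fin.last d), by simpa [lastSection] using hS, x (Fin.last d), hx _, ?_⟩⟩
    · simpa [Fin.init] using hT i.castSucc
    · simpa using (hT (Fin.last d)).symm
  · rintro ⟨_, ⟨Q, rfl, x, hx, hP⟩, hB⟩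
    obtain ⟨A, hA, y, hy, rfl⟩ := mem_setShadow.1 hB
    refine ⟨Fin.snoc Q A, hA, Fin.snoc x y, ?_, ?_⟩ <;> simp [Fin.forall_fin_succ', hx, hy, hP]

variable {d : ℕ} {F : Set (Fin (d + 1) → Finset ℕ)}

lemma lastSection_compressLast (P : Fin d → Finset ℕ) :
    lastSection (compressLast n r d F) P = compress n r (lastSection F P) := by
  ext A
  simp [lastSection, compressLast]

lemma mem_uniformOn_of_mem_compressLast (hF : ∀ S ∈ F, ∀ i, S i ∈ uniformOn n r)
    {T : Fin (d + 1) → Finset ℕ} (hT : T ∈ compressLast n r d F) (i : Fin (d + 1)) :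
    T i ∈ uniformOn n r := by
  obtain ⟨A, hA⟩ := nonempty_of_mem_compress hT
  refine Fin.lastCases (compress_subset_uniformOn _ hT) (fun j => ?_) i
  simpa [Fin.init] using hF _ hA j.castSucc

lemma mem_uniformOn_of_mem_multiShadow {d : ℕ} {F : Set (Fin d → Finset ℕ)}
    (hF : ∀ S ∈ F, ∀ i, S i ∈ uniformOn n r) {T : Fin d → Finset ℕ} (hT : T ∈ multiShadow d F)
    (i : Fin d) : T i ∈ uniformOn n (r - 1) := by
  obtain ⟨S, hS, x, hx, hT⟩ := hT
  obtain ⟨hsub, hcard⟩ := hF S hS i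
  rw [hT i]
  exact ⟨(erase_subset _ _).trans hsub, by rw [card_erase_of_mem (hx i), hcard]⟩

theorem ncard_lastSection_multiShadow_compressLast_le (hF : ∀ S ∈ F, ∀ i, S i ∈ uniformOn n r)
    (P : Fin d → Finset ℕ) :
    (lastSection (multiShadow (d + 1) (compressLast n r d F)) P).ncard ≤
      (lastSection (multiShadow (d + 1) F) P).ncard := by
  have hFfin : F.Finite := (Set.Finite.pi' fun _ => finite_uniformOn n r).subset hF
  set parents := {Q | P ∈ multiShadow d {Q} ∧ (lastSection F Q).Nonempty}
  have hparents : parents.Finite :=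
    (hFfin.image Fin.init).subset fun Q ⟨_, A, hA⟩ => ⟨_, hA, Fin.init_snoc _ _⟩
  have hcover : lastSection (multiShadow (d + 1) (compressLast n r d F)) P ⊆
      ⋃ Q ∈ parents, setShadow (compress n r (lastSection F Q)) := by
    intro B hB
    obtain ⟨Q, hPQ, hBQ⟩ := snoc_mem_multiShadow_iff.1 hB
    rw [lastSection_compressLast] at hBQ
    obtain ⟨A, hA, -⟩ := mem_setShadow.1 hBQ
    exact Set.mem_biUnion ⟨hPQ, nonempty_of_mem_compress hA⟩ hBQ
  rcases parents.eq_empty_or_nonempty with hempty | hne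
  · rw [Set.subset_eq_empty hcover (by simp [hempty]), Set.ncard_empty]
    exact Nat.zero_le _
  obtain ⟨Q, hQ, hmax⟩ := parents.exists_max_image (fun Q => (lastSection F Q).ncard) hparents hne
  calc _ ≤ (setShadow (compress n r (lastSection F Q))).ncard :=
        Set.ncard_le_ncard (hcover.trans (Set.iUnion₂_subset fun Q' hQ' =>
          setShadow_mono (compress_mono (hmax Q' hQ'))))
          ((finite_uniformOn n r).subset (compress_subset_uniformOn _)).setShadow
    _ ≤ (setShadow (lastSection F Q)).ncard :=
        ncard_setShadow_compress_le (lastSection_subset hF Q)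
    _ ≤ _ := Set.ncard_le_ncard (fun B hB => snoc_mem_multiShadow_iff.2 ⟨Q, hQ.1, hB⟩)
        ((finite_uniformOn n (r - 1)).subset
          (lastSection_subset (fun _ hT => mem_uniformOn_of_mem_multiShadow hF hT) P))

theorem stmt3_general (n r d : ℕ)
    (F : Set (Fin (d + 1) → Finset ℕ)) (hF : ∀ S ∈ F, ∀ i, S i ∈ uniformOn n r) :
    (compressLast n r d F).ncard = F.ncard ∧
      (multiShadow (d + 1) (compressLast n r d F)).ncard ≤ (multiShadow (d + 1) F).ncard := by
  have hF' : ∀ T ∈ compressLast n r d F, ∀ i, T i ∈ uniformOn n r :=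
    fun _ => mem_uniformOn_of_mem_compressLast hF
  constructor
  · rw [ncard_eq_sum_ncard_lastSection (finite_uniformOn n r) hF',
      ncard_eq_sum_ncard_lastSection (finite_uniformOn n r) hF]
    refine sum_congr rfl fun P _ => ?_
    rw [lastSection_compressLast, ncard_compress (lastSection_subset hF P)]
  · rw [ncard_eq_sum_ncard_lastSection (finite_uniformOn n (r - 1))
        fun _ => mem_uniformOn_of_mem_multiShadow hF',
      ncard_eq_sum_ncard_lastSection (finite_uniformOn n (r - 1))
        fun _ => mem_uniformOn_of_mem_multiShadow hF]
    exact sum_le_sum fun P _ => ncard_lastSection_multiShadow_compressLast_le hF P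

theorem stmt3 (n r d : ℕ) (hr : 1 ≤ r)
    (F : Set (Fin (d + 1) → Finset ℕ)) (hF : ∀ S ∈ F, ∀ i, S i ∈ uniformOn n r) :
    (compressLast n r d F).ncard = F.ncard ∧
      (multiShadow (d + 1) (compressLast n r d F)).ncard ≤ (multiShadow (d + 1) F).ncard :=
  stmt3_general n r d F hF
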